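/- For every even number n ≥ 4, there exists an even permutation σ of {0,1}^n such that for all r_1, r_2, r_3 ∈ [n], all τ ∈ SC^{(r_1)}, and all π ∈ SC^{(r_2)}, the composition σ ∘ τ ∘ π is not an r_3-controlled permutation (i.e., σ ∘ τ ∘ π ∉ S^{(r_3)}). -/

import Mathlib

open Equiv

/-- `x` with its `i`-th bit flipped. -/
def flipBit {n : ℕ} (i : Fin n) (x : Fin n → Bool) : Fin n → Bool :=
  Function.update x i (!x i)

/-- `SC i`: the set of `i`-concurrent controlled permutations (`i`-CCRBFs) of
the hypercube `{0,1}^n`: the `i`-th bit of every point is preserved, and the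
action on all other bits does not depend on the `i`-th bit. -/
def SC {n : ℕ} (i : Fin n) : Set (Perm (Fin n → Bool)) :=
  {σ | (∀ x, σ x i = x i) ∧ ∀ x, ∀ k, k ≠ i → σ x k = σ (flipBit i x) k}

/-- `AC i`: the set of concurrently even `i`-CCRBFs: those `σ ∈ SC i` whose
induced permutation of the face `{x | x i = false}` is even. -/
def AC {n : ℕ} (i : Fin n) : Set (Perm (Fin n → Bool)) :=
  {σ | σ ∈ SC i ∧ ∃ h : ∀ x : Fin n → Bool, x i = false ↔ σ x i = false,
    Perm.sign (σ.subtypePerm (p := fun x => x i = false) (fun x => (h x).symm)) = 1}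

/-!
Consider the mod-2 correlation `∑ₓ x_a · f(x)_b` between input bit `a` and output bit `b` of a
map `f` of the hypercube. If `τ ∈ SC r₁`, `π ∈ SC r₂` and `σ τ π` preserves bit `r₃`, the
substitution `x = τ (π y)` turns the `(r₁, r₃)`-correlation of `σ` into `∑ᵧ π(y)_{r₁} · y_{r₃}`,
which vanishes for `n ≥ 3` because its terms cancel in pairs under flipping a suitable bit.
On the other hand, composing with a transposition `(p q)` of points fixed so far changes every
correlation by `(p ⊕ q)_a (p ⊕ q)_b`, so six disjoint transpositions with well-chosen
differences give an even permutation all of whose correlations are `1`.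
-/

section SwapProd

variable {X : Type*}

def swapSupport : List (X × X) → List X
  | [] => []
  | (p, q) :: l => p :: q :: swapSupport l

theorem swapSupport_map {Y : Type*} (f : X → Y) (l : List (X × X)) :
    swapSupport (l.map (Prod.map f f)) = (swapSupport l).map f := by
  induction l with
  | nil => rfl
  | cons pq l ih => simp [swapSupport, ih]

variable [DecidableEq X]

def swapProd : List (X × X) → Perm X
  | [] => 1
  | (p, q) :: l => swapProd l * swap p q

theorem swapProd_apply_of_notMem {l : List (X × X)} {x : X} (hx : x ∉ swapSupport l) :
    swapProd l x = x := by
  induction l with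
  | nil => rfl
  | cons pq l ih =>
    obtain ⟨p, q⟩ := pq
    simp only [swapSupport, List.mem_cons, not_or] at hx
    rw [swapProd, Perm.mul_apply, swap_apply_of_ne_of_ne hx.1 hx.2.1, ih hx.2.2]

theorem sign_swapProd [Fintype X] {l : List (X × X)} (hl : (swapSupport l).Nodup) :
    Perm.sign (swapProd l) = (-1) ^ l.length := by
  induction l with
  | nil => simp [swapProd]
  | cons pq l ih =>
    obtain ⟨p, q⟩ := pq
    simp only [swapSupport, List.nodup_cons, List.mem_cons, not_or] at hl
    rw [swapProd, Perm.sign_mul, Perm.sign_swap hl.1.1, ih hl.2.2, List.length_cons, pow_succ]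

variable [Fintype X] {R : Type*} [CommRing R]

theorem sum_mul_apply_mul_swap (u v : X → R) (σ : Perm X) (p q : X) :
    ∑ x, u x * v ((σ * swap p q) x) =
      ∑ x, u x * v (σ x) + (u p - u q) * (v (σ q) - v (σ p)) := by
  rcases eq_or_ne p q with rfl | hpq
  · simp
  have hswap : ∑ x, u x * v ((σ * swap p q) x) = ∑ y, u (swap p q y) * v (σ y) := by
    rw [← Equiv.sum_comp (swap p q)]
    simp only [Perm.mul_apply, swap_apply_self]
  have hdiff : ∑ y, (u (swap p q y) - u y) * v (σ y) =
      (u q - u p) * v (σ p) + (u p - u q) * v (σ q) := by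
    rw [Fintype.sum_eq_add p q hpq fun y hy => by
      rw [swap_apply_of_ne_of_ne hy.1 hy.2, sub_self, zero_mul]]
    rw [swap_apply_left, swap_apply_right]
  have hsplit : ∑ y, u (swap p q y) * v (σ y) =
      ∑ y, u y * v (σ y) + ∑ y, (u (swap p q y) - u y) * v (σ y) := by
    rw [← Finset.sum_add_distrib]
    exact Finset.sum_congr rfl fun y _ => by ring
  rw [hswap, hsplit, hdiff]
  ring

theorem sum_mul_swapProd_apply (u v : X → R) {l : List (X × X)} (hl : (swapSupport l).Nodup) :
    ∑ x, u x * v (swapProd l x) =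
      ∑ x, u x * v x + (l.map fun pq => (u pq.1 - u pq.2) * (v pq.2 - v pq.1)).sum := by
  induction l with
  | nil => simp [swapProd]
  | cons pq l ih =>
    obtain ⟨p, q⟩ := pq
    simp only [swapSupport, List.nodup_cons, List.mem_cons, not_or] at hl
    rw [swapProd, sum_mul_apply_mul_swap, ih hl.2.2, swapProd_apply_of_notMem hl.1.2,
      swapProd_apply_of_notMem hl.2.1, List.map_cons, List.sum_cons]
    ring

end SwapProd

section Hypercube

variable {n : ℕ}

theorem flipBit_flipBit (c : Fin n) (x : Fin n → Bool) : flipBit c (flipBit c x) = x := by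
  simp [flipBit]

theorem flipBit_ne_self (c : Fin n) (x : Fin n → Bool) : flipBit c x ≠ x := fun h => by
  simpa [flipBit] using congrFun h c

theorem flipBit_apply_of_ne {c k : Fin n} (h : k ≠ c) (x : Fin n → Bool) :
    flipBit c x k = x k :=
  Function.update_of_ne h _ _

theorem sum_eq_zero_of_flipBit_invariant {R : Type*} [Ring R] [CharP R 2]
    {g : (Fin n → Bool) → R} (c : Fin n) (hg : ∀ x, g (flipBit c x) = g x) : ∑ x, g x = 0 :=
  Finset.sum_ninvolution (flipBit c) (fun x => by rw [hg, CharTwo.add_self_eq_zero])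
    (fun x _ => flipBit_ne_self c x) (fun _ => Finset.mem_univ _) (flipBit_flipBit c)

def bitZ2 (b : Bool) : ZMod 2 := if b then 1 else 0

def bitCorr (f g : (Fin n → Bool) → Fin n → Bool) (a b : Fin n) : ZMod 2 :=
  ∑ x, bitZ2 (f x a) * bitZ2 (g x b)

theorem bitCorr_comp_perm (f g : (Fin n → Bool) → Fin n → Bool) (ρ : Perm (Fin n → Bool))
    (a b : Fin n) : bitCorr (f ∘ ρ) (g ∘ ρ) a b = bitCorr f g a b :=
  Equiv.sum_comp ρ fun x => bitZ2 (f x a) * bitZ2 (g x b)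

theorem bitCorr_id_id (hn : 3 ≤ n) (a b : Fin n) : bitCorr id id a b = 0 := by
  obtain ⟨c, hca, hcb⟩ := Fin.exists_ne_and_ne_of_two_lt a b (by omega)
  exact sum_eq_zero_of_flipBit_invariant c fun x => by
    simp only [id, flipBit_apply_of_ne hca.symm, flipBit_apply_of_ne hcb.symm]

theorem bitCorr_eq_zero_of_mem_SC (hn : 3 ≤ n) {r : Fin n} {π : Perm (Fin n → Bool)}
    (hπ : π ∈ SC r) (a b : Fin n) : bitCorr π id a b = 0 := by
  obtain ⟨hfix, hflip⟩ := hπ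
  by_cases hra : r = a
  · subst hra
    simpa only [bitCorr, id_eq, hfix] using bitCorr_id_id hn r b
  by_cases hrb : r = b
  · subst hrb
    rw [← bitCorr_comp_perm π id π.symm]
    refine Eq.trans (Finset.sum_congr rfl fun x _ => ?_) (bitCorr_id_id hn a r)
    rw [Function.comp_apply, Function.comp_apply, Equiv.apply_symm_apply, id_eq, id_eq,
      ← hfix (π.symm x), Equiv.apply_symm_apply]
  exact sum_eq_zero_of_flipBit_invariant r fun x => by
    simp only [id, ← hflip x a (Ne.symm hra), flipBit_apply_of_ne (Ne.symm hrb)]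

theorem bitCorr_id_eq_of_mul_mul_preserves {a b : Fin n} {σ τ π : Perm (Fin n → Bool)}
    (hτ : ∀ x, τ x a = x a) (h : ∀ x, (σ * τ * π) x b = x b) :
    bitCorr id σ a b = bitCorr π id a b := by
  rw [← bitCorr_comp_perm id σ (π.trans τ)]
  refine Finset.sum_congr rfl fun x _ => ?_
  simp only [Function.comp_apply, id_eq, Equiv.coe_trans, hτ]
  rw [← h x]
  rfl

end Hypercube

section Witness

/-- The differences `p ⊕ q` of these pairs are the rows of a `6 × 4` matrix `D` over `𝔽₂` with
`Dᵀ D` the all-ones matrix; no even number of pairs below six admits such a `D`. -/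
def witnessPairs : List ((Fin 4 → Bool) × (Fin 4 → Bool)) :=
  [(![false, false, false, false], ![true, false, false, false]),
   (![false, false, true, false], ![false, true, true, false]),
   (![false, false, false, true], ![true, true, false, true]),
   (![false, true, false, false], ![false, true, true, true]),
   (![true, true, true, false], ![false, true, false, true]),
   (![true, true, false, false], ![true, false, true, true])]

def liftBits (n : ℕ) (y : Fin 4 → Bool) : Fin n → Bool := fun j => y ⟨min j 3, by omega⟩

theorem liftBits_injective {n : ℕ} (hn : 4 ≤ n) : Function.Injective (liftBits n) := by
  intro y z h
  funext i
  have := congrFun h ⟨i, by omega⟩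
  simpa [liftBits, Nat.min_eq_left (Nat.le_of_lt_succ i.isLt)] using this

def witness (n : ℕ) : Perm (Fin n → Bool) :=
  swapProd (witnessPairs.map (Prod.map (liftBits n) (liftBits n)))

theorem swapSupport_witness_nodup {n : ℕ} (hn : 4 ≤ n) :
    (swapSupport (witnessPairs.map (Prod.map (liftBits n) (liftBits n)))).Nodup := by
  rw [swapSupport_map]
  exact (List.nodup_map_iff (liftBits_injective hn)).mpr (by decide)

theorem sign_witness {n : ℕ} (hn : 4 ≤ n) : Perm.sign (witness n) = 1 := by
  rw [witness, sign_swapProd (swapSupport_witness_nodup hn), List.length_map]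
  decide

theorem bitCorr_id_witness {n : ℕ} (hn : 4 ≤ n) (a b : Fin n) :
    bitCorr id (witness n) a b = 1 := by
  have hD : ∀ i j : Fin 4, (witnessPairs.map fun pq =>
      (bitZ2 (pq.1 i) - bitZ2 (pq.2 i)) * (bitZ2 (pq.2 j) - bitZ2 (pq.1 j))).sum = 1 := by
    decide
  have h := sum_mul_swapProd_apply (fun x => bitZ2 (x a)) (fun x => bitZ2 (x b))
    (swapSupport_witness_nodup hn)
  have h0 := bitCorr_id_id (by omega) a b
  simp only [bitCorr, id_eq] at h0 ⊢
  rw [witness, h, h0, zero_add, List.map_map]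
  exact hD _ _

end Witness

theorem three_blocks_tight_general (n : ℕ) (hn : 4 ≤ n) :
    ∃ σ : Perm (Fin n → Bool), Perm.sign σ = 1 ∧
      ∀ (r1 r2 r3 : Fin n), ∀ τ ∈ SC r1, ∀ π ∈ SC r2,
        ¬ (∀ x, (σ * τ * π) x r3 = x r3) := by
  refine ⟨witness n, sign_witness hn, ?_⟩
  rintro r1 r2 r3 τ hτ π hπ h
  have hcorr := bitCorr_id_witness hn r1 r3
  rw [bitCorr_id_eq_of_mul_mul_preserves hτ.1 h, bitCorr_eq_zero_of_mem_SC (by omega) hπ] at hcorr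
  exact zero_ne_one hcorr

/-- Tightness of three blocks: for every even `n ≥ 4` there is an even
permutation of `{0,1}^n` that no two concurrent controlled blocks can turn
into a controlled permutation. -/
theorem three_blocks_tight (n : ℕ) (hn : 4 ≤ n) (hpar : Even n) :
    ∃ σ : Perm (Fin n → Bool), Perm.sign σ = 1 ∧
      ∀ (r1 r2 r3 : Fin n), ∀ τ ∈ SC r1, ∀ π ∈ SC r2,
        ¬ (∀ x, (σ * τ * π) x r3 = x r3) :=
  three_blocks_tight_general n hn
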